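/- arXiv:1901.06567 — 4 statements merged into one kernel-verified Lean document; each statement's English description precedes it below -/
import Mathlib

section
/- The reflection law for binary relations: for all binary relations A, B, C, D on a set U, (A ∘ B) ∩ C ⊆ ((A ∩ ∼D) ∘ B) ∪ (A ∘ (B ∩ (D ∘ C))), where A ∘ B = B | A is fusion and ∼D is the converse-complement of D. -/
def relComp {U : Type*} (R S : Set (U × U)) : Set (U × U) :=
  {p | ∃ z, (p.1, z) ∈ R ∧ (z, p.2) ∈ S}

def fus {U : Type*} (A B : Set (U × U)) : Set (U × U) := relComp B A

def relConv {U : Type*} (R : Set (U × U)) : Set (U × U) :=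
  {p | (p.2, p.1) ∈ R}

def relNeg {U : Type*} (R : Set (U × U)) : Set (U × U) :=
  (relConv R)ᶜ

theorem reflection_law {U : Type*} (A B C D : Set (U × U)) :
    fus A B ∩ C ⊆ fus (A ∩ relNeg D) B ∪ fus A (B ∩ fus D C) := by
  rintro ⟨x, y⟩ ⟨⟨z, hB, hA⟩, hC⟩
  by_cases hD : (y, z) ∈ D
  · exact Or.inr ⟨z, ⟨hB, y, hC, hD⟩, hA⟩
  · exact Or.inl ⟨z, hB, hA, hD⟩
end

section
/- For all binary relations A, B, C, D on a set U, (A → B) ∩ (C ∘ D) ⊆ ((C ∩ B) ∘ D) ∪ (C ∘ (D ∩ ∼A)), where ∘ is fusion, → is residuation, and ∼ is converse-complement. -/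
def resid {U : Type*} (R S : Set (U × U)) : Set (U × U) :=
  (relComp (relConv R) Sᶜ)ᶜ

theorem resid_inter_fusion {U : Type*} (A B C D : Set (U × U)) :
    resid A B ∩ fus C D ⊆ fus (C ∩ B) D ∪ fus C (D ∩ relNeg A) := by
  rintro ⟨x, y⟩ ⟨hr, z, hD, hC⟩
  simp only [resid, relComp, relConv, Set.mem_compl_iff, Set.mem_setOf_eq, not_exists,
    not_and, not_not] at hr
  by_cases hA : (z, x) ∈ A
  · exact Or.inl ⟨z, hD, hC, hr z hA⟩
  · exact Or.inr ⟨z, ⟨hD, hA⟩, hC⟩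
end

section
/- In any structure satisfying Tarski's axioms for relation algebras except possibly associativity of relative multiplication, the Peircean law variant x ; y · z ≤ x ; (y · x⌣ ; z) holds, where · is meet and ≤ the Boolean order. -/
theorem peircean_law {α : Type*} [BooleanAlgebra α]
    (comp : α → α → α) (conv : α → α) (e : α)
    (r5 : ∀ x y z, comp (x ⊔ y) z = comp x z ⊔ comp y z)
    (r6 : ∀ x, comp x e = x)
    (r7 : ∀ x, conv (conv x) = x)
    (r8 : ∀ x y, conv (x ⊔ y) = conv x ⊔ conv y)
    (r9 : ∀ x y, conv (comp x y) = comp (conv y) (conv x))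
    (r10 : ∀ x y, comp (conv x) (comp x y)ᶜ ≤ yᶜ) :
    ∀ x y z, comp x y ⊓ z ≤ comp x (y ⊓ comp (conv x) z) := by
  -- right distributivity of comp over ⊔
  have rdist : ∀ x y z : α, comp x (y ⊔ z) = comp x y ⊔ comp x z := by
    intro x y z
    have h := congrArg conv (r9 x (y ⊔ z))
    rw [r7, r8, r5, ← r9, ← r9, ← r8, r7] at h
    exact h
  -- monotonicity in the second argument
  have mono2 : ∀ (x : α) {a b : α}, a ≤ b → comp x a ≤ comp x b := by
    intro x a b hab
    have : comp x (a ⊔ b) = comp x a ⊔ comp x b := rdist x a b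
    rw [sup_eq_right.mpr hab] at this
    rw [this]; exact le_sup_left
  intro x y z
  set w := comp (conv x) z with hw
  have h10 : comp x wᶜ ≤ zᶜ := by
    have := r10 (conv x) z
    rw [r7] at this
    exact this
  have hy : (y ⊓ w) ⊔ (y ⊓ wᶜ) = y := sup_inf_inf_compl
  have key : comp x y ⊓ z = (comp x (y ⊓ w) ⊔ comp x (y ⊓ wᶜ)) ⊓ z := by
    rw [← rdist, hy]
  rw [key, inf_sup_right]
  have h2 : comp x (y ⊓ wᶜ) ⊓ z ≤ ⊥ := by
    have : comp x (y ⊓ wᶜ) ≤ zᶜ := le_trans (mono2 x inf_le_right) h10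
    calc comp x (y ⊓ wᶜ) ⊓ z ≤ zᶜ ⊓ z := inf_le_inf_right z this
      _ = ⊥ := compl_inf_self z
  calc comp x (y ⊓ w) ⊓ z ⊔ comp x (y ⊓ wᶜ) ⊓ z
      ≤ comp x (y ⊓ w) ⊔ ⊥ := sup_le_sup inf_le_left h2
    _ = comp x (y ⊓ w) := sup_bot_eq _
end

section
/- In any structure satisfying Tarski's relation-algebra axioms except possibly associativity of ;, the inequality x ; y · z ≤ (x · (w⌣)⁻) ; y + x ; (y · w ; z) holds for all elements x, y, z, w. -/
theorem reflection_inequality {α : Type*} [BooleanAlgebra α]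
    (comp : α → α → α) (conv : α → α) (e : α)
    (r5 : ∀ x y z, comp (x ⊔ y) z = comp x z ⊔ comp y z)
    (r6 : ∀ x, comp x e = x)
    (r7 : ∀ x, conv (conv x) = x)
    (r8 : ∀ x y, conv (x ⊔ y) = conv x ⊔ conv y)
    (r9 : ∀ x y, conv (comp x y) = comp (conv y) (conv x))
    (r10 : ∀ x y, comp (conv x) (comp x y)ᶜ ≤ yᶜ) :
    ∀ x y z w, comp x y ⊓ z ≤ comp (x ⊓ (conv w)ᶜ) y ⊔ comp x (y ⊓ comp w z) := by
  -- left distributivity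
  have ldist : ∀ z x y, comp z (x ⊔ y) = comp z x ⊔ comp z y := by
    intro z x y
    have : conv (comp z (x ⊔ y)) = conv (comp z x ⊔ comp z y) := by
      rw [r9, r8, r5, r8, r9, r9]
    have h := congrArg conv this
    rwa [r7, r7] at h
  -- monotonicity in first argument
  have mono1 : ∀ a b c : α, a ≤ b → comp a c ≤ comp b c := by
    intro a b c hab
    have : a ⊔ b = b := sup_eq_right.mpr hab
    calc comp a c ≤ comp a c ⊔ comp b c := le_sup_left
      _ = comp (a ⊔ b) c := (r5 a b c).symm
      _ = comp b c := by rw [this]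
  -- monotonicity in second argument
  have mono2 : ∀ a b c : α, b ≤ c → comp a b ≤ comp a c := by
    intro a b c hbc
    have : b ⊔ c = c := sup_eq_right.mpr hbc
    calc comp a b ≤ comp a b ⊔ comp a c := le_sup_left
      _ = comp a (b ⊔ c) := (ldist a b c).symm
      _ = comp a c := by rw [this]
  -- conv monotone
  have cmono : ∀ a b : α, a ≤ b → conv a ≤ conv b := by
    intro a b hab
    have : a ⊔ b = b := sup_eq_right.mpr hab
    calc conv a ≤ conv a ⊔ conv b := le_sup_left
      _ = conv (a ⊔ b) := (r8 a b).symm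
      _ = conv b := by rw [this]
  -- Dedekind-style key lemma
  have key : ∀ a y z : α, comp a y ⊓ z ≤ comp a (y ⊓ comp (conv a) z) := by
    intro a y z
    set s := comp (conv a) z with hs
    have hy : y = (y ⊓ s) ⊔ (y ⊓ sᶜ) := by
      rw [← inf_sup_left, sup_compl_eq_top, inf_top_eq]
    have hsplit : comp a y = comp a (y ⊓ s) ⊔ comp a (y ⊓ sᶜ) := by
      conv_lhs => rw [hy]
      exact ldist a _ _
    have hbad : comp a (y ⊓ sᶜ) ≤ zᶜ := by
      have h1 : comp a (y ⊓ sᶜ) ≤ comp a sᶜ := mono2 _ _ _ inf_le_right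
      have h2 : comp a sᶜ ≤ zᶜ := by
        have := r10 (conv a) z
        rwa [r7] at this
      exact h1.trans h2
    calc comp a y ⊓ z = (comp a (y ⊓ s) ⊔ comp a (y ⊓ sᶜ)) ⊓ z := by rw [hsplit]
      _ = comp a (y ⊓ s) ⊓ z ⊔ comp a (y ⊓ sᶜ) ⊓ z := inf_sup_right _ _ _
      _ ≤ comp a (y ⊓ s) ⊔ ⊥ := by
          apply sup_le_sup inf_le_left
          have : comp a (y ⊓ sᶜ) ⊓ z ≤ zᶜ ⊓ z := inf_le_inf_right z hbad
          simpa using this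
      _ = comp a (y ⊓ s) := sup_bot_eq _
  -- main proof
  intro x y z w
  have hx : x = (x ⊓ (conv w)ᶜ) ⊔ (x ⊓ conv w) := by
    rw [← inf_sup_left, compl_sup_eq_top, inf_top_eq]
  set a := x ⊓ conv w with ha
  have hsplit : comp x y = comp (x ⊓ (conv w)ᶜ) y ⊔ comp a y := by
    conv_lhs => rw [hx]
    exact r5 _ _ _
  have hconva : conv a ≤ w := by
    have : conv a ≤ conv (conv w) := cmono _ _ inf_le_right
    rwa [r7] at this
  have h2 : comp a y ⊓ z ≤ comp x (y ⊓ comp w z) := by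
    refine (key a y z).trans ?_
    have h3 : comp a (y ⊓ comp (conv a) z) ≤ comp a (y ⊓ comp w z) :=
      mono2 _ _ _ (inf_le_inf_left y (mono1 _ _ _ hconva))
    exact h3.trans (mono1 _ _ _ inf_le_left)
  calc comp x y ⊓ z = (comp (x ⊓ (conv w)ᶜ) y ⊔ comp a y) ⊓ z := by rw [hsplit]
    _ = comp (x ⊓ (conv w)ᶜ) y ⊓ z ⊔ comp a y ⊓ z := inf_sup_right _ _ _
    _ ≤ comp (x ⊓ (conv w)ᶜ) y ⊔ comp x (y ⊓ comp w z) := sup_le_sup inf_le_left h2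
end
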